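/- arXiv:2408.15506 — 10 statements merged into one kernel-verified Lean document; each statement's English description precedes it below -/
import Mathlib

section
/- For all integers d ≥ 1 and n ≥ d + 2, the real polynomials g_{n,d}(t) satisfy the recurrence (n−d−1)·g_{n,d}(t) = ((2d−n+1)t + n−2)·g_{n−1,d}(t) + t(n−d−2)·g_{n−2,d}(t). -/
open Polynomial

/-- Speyer's g-polynomial of the uniform matroid `U_{n,d}` as a real polynomial:
`g_{n,d}(t) = Σ_{i=1}^{min(d, n-d)} ((n-i-1)! / ((d-i)! (n-d-i)! (i-1)!)) t^i`.
When `d = 0` or `d = n` the sum is empty, so `gPoly n d = 0`, matching the convention. -/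
noncomputable def gPoly (n d : ℕ) : Polynomial ℝ :=
  ∑ i ∈ Finset.Icc 1 (min d (n - d)),
    C ((Nat.factorial (n - i - 1) : ℝ) /
        ((Nat.factorial (d - i) : ℝ) * (Nat.factorial (n - d - i) : ℝ) *
          (Nat.factorial (i - 1) : ℝ))) * X ^ i

/-- The coefficient function of `gPoly`. -/
noncomputable def aC (n d i : ℕ) : ℝ :=
  if 1 ≤ i ∧ i ≤ d ∧ i ≤ n - d then
    (Nat.factorial (n - i - 1) : ℝ) /
      ((Nat.factorial (d - i) : ℝ) * (Nat.factorial (n - d - i) : ℝ) *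
        (Nat.factorial (i - 1) : ℝ))
  else 0

lemma aC_eq (n d i a b c e : ℕ) (ha : n - i - 1 = a) (hb : d - i = b)
    (hc : n - d - i = c) (he : i - 1 = e) (h1 : 1 ≤ i) (h2 : i ≤ d) (h3 : i + d ≤ n) :
    aC n d i = (Nat.factorial a : ℝ) /
      ((Nat.factorial b : ℝ) * (Nat.factorial c : ℝ) * (Nat.factorial e : ℝ)) := by
  have h3' : i ≤ n - d := by omega
  rw [aC, if_pos ⟨h1, h2, h3'⟩, ha, hb, hc, he]

lemma aC_eq_zero {n d i : ℕ} (h : i = 0 ∨ d < i ∨ n - d < i) : aC n d i = 0 := by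
  rw [aC, if_neg]
  rintro ⟨h1, h2, h3⟩
  omega

lemma gPoly_coeff (n d k : ℕ) : (gPoly n d).coeff k = aC n d k := by
  rw [gPoly, Polynomial.finset_sum_coeff]
  simp only [Polynomial.coeff_C_mul, Polynomial.coeff_X_pow, mul_ite, mul_one, mul_zero,
    Finset.sum_ite_eq]
  rw [aC]
  simp only [Finset.mem_Icc, le_min_iff, and_assoc]

lemma factCast_ne (a : ℕ) : ((Nat.factorial a : ℕ) : ℝ) ≠ 0 :=
  Nat.cast_ne_zero.2 (Nat.factorial_ne_zero a)

lemma fact_succ_cast (a : ℕ) : ((Nat.factorial (a + 1) : ℕ) : ℝ) = (a + 1) * Nat.factorial a := by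
  rw [Nat.factorial_succ]; push_cast; ring

lemma key (d m k : ℕ) (hd : 1 ≤ d) :
    ((m : ℝ) + 1) * aC (d + m + 2) d (k + 1) =
      ((d : ℝ) - m - 1) * aC (d + m + 1) d k + ((d : ℝ) + m) * aC (d + m + 1) d (k + 1) +
        (m : ℝ) * aC (d + m) d k := by
  rcases Nat.lt_or_ge d k with h1 | h1
  · -- k ≥ d+1 : everything vanishes
    rw [aC_eq_zero (by omega), aC_eq_zero (by omega), aC_eq_zero (by omega),
      aC_eq_zero (by omega)]
    ring
  rcases Nat.lt_or_ge (m + 1) k with h2 | h2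
  · -- k ≥ m+2 : everything vanishes
    rw [aC_eq_zero (by omega), aC_eq_zero (by omega), aC_eq_zero (by omega),
      aC_eq_zero (by omega)]
    ring
  -- now k ≤ d and k ≤ m + 1
  rcases Nat.lt_or_ge k d with h3 | h3
  · -- k + 1 ≤ d
    rcases Nat.lt_or_ge m k with h4 | h4
    · -- k = m + 1
      obtain rfl : k = m + 1 := by omega
      obtain ⟨p, rfl⟩ : ∃ p, d = m + 2 + p := ⟨d - (m + 2), by omega⟩
      rw [aC_eq (m + 2 + p + m + 2) (m + 2 + p) (m + 1 + 1) (m + p + 1) p 0 (m + 1)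
          (by omega) (by omega) (by omega) (by omega) (by omega) (by omega) (by omega),
        aC_eq (m + 2 + p + m + 1) (m + 2 + p) (m + 1) (m + p + 1) (p + 1) 0 m
          (by omega) (by omega) (by omega) (by omega) (by omega) (by omega) (by omega),
        aC_eq_zero (by omega), aC_eq_zero (by omega)]
      rw [fact_succ_cast (m + p), fact_succ_cast p, fact_succ_cast m, Nat.factorial_zero]
      push_cast
      field_simp
      ring
    · rcases Nat.eq_zero_or_pos k with rfl | h5
      · -- k = 0
        obtain ⟨p, rfl⟩ : ∃ p, d = p + 1 := ⟨d - 1, by omega⟩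
        rw [aC_eq (p + 1 + m + 2) (p + 1) (0 + 1) (p + m + 1) p (m + 1) 0
            (by omega) (by omega) (by omega) (by omega) (by omega) (by omega) (by omega),
          aC_eq (p + 1 + m + 1) (p + 1) (0 + 1) (p + m) p m 0
            (by omega) (by omega) (by omega) (by omega) (by omega) (by omega) (by omega),
          aC_eq_zero (by omega), aC_eq_zero (by omega)]
        rw [fact_succ_cast (p + m), fact_succ_cast m, Nat.factorial_zero]
        push_cast
        field_simp
        ring
      · -- generic interior case : 1 ≤ k, k + 1 ≤ d, k ≤ m
        obtain ⟨e, rfl⟩ : ∃ e, k = e + 1 := ⟨k - 1, by omega⟩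
        obtain ⟨p, rfl⟩ : ∃ p, d = e + 2 + p := ⟨d - (e + 2), by omega⟩
        obtain ⟨q, rfl⟩ : ∃ q, m = e + 1 + q := ⟨m - (e + 1), by omega⟩
        rw [aC_eq (e + 2 + p + (e + 1 + q) + 2) (e + 2 + p) (e + 1 + 1)
            (p + q + e + 1 + 1) p (q + 1) (e + 1)
            (by omega) (by omega) (by omega) (by omega) (by omega) (by omega) (by omega),
          aC_eq (e + 2 + p + (e + 1 + q) + 1) (e + 2 + p) (e + 1)
            (p + q + e + 1 + 1) (p + 1) (q + 1) e
            (by omega) (by omega) (by omega) (by omega) (by omega) (by omega) (by omega),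
          aC_eq (e + 2 + p + (e + 1 + q) + 1) (e + 2 + p) (e + 1 + 1)
            (p + q + e + 1) p q (e + 1)
            (by omega) (by omega) (by omega) (by omega) (by omega) (by omega) (by omega),
          aC_eq (e + 2 + p + (e + 1 + q)) (e + 2 + p) (e + 1)
            (p + q + e + 1) (p + 1) q e
            (by omega) (by omega) (by omega) (by omega) (by omega) (by omega) (by omega)]
        rw [fact_succ_cast (p + q + e + 1), fact_succ_cast p, fact_succ_cast q,
          fact_succ_cast e]
        push_cast
        field_simp
        ring
  · -- k = d
    obtain rfl : k = d := by omega
    rcases Nat.lt_or_ge m k with h4 | h4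
    · -- k = m + 1
      obtain rfl : k = m + 1 := by omega
      rw [aC_eq_zero (n := m + 1 + m + 2) (d := m + 1) (i := m + 1 + 1) (by omega),
        aC_eq_zero (n := m + 1 + m + 1) (d := m + 1) (i := m + 1 + 1) (by omega),
        aC_eq_zero (n := m + 1 + m) (d := m + 1) (i := m + 1) (by omega)]
      push_cast
      ring
    · -- k ≤ m
      obtain ⟨e, rfl⟩ : ∃ e, k = e + 1 := ⟨k - 1, by omega⟩
      obtain ⟨q, rfl⟩ : ∃ q, m = e + 1 + q := ⟨m - (e + 1), by omega⟩
      rw [aC_eq_zero (n := e + 1 + (e + 1 + q) + 2) (d := e + 1) (i := e + 1 + 1) (by omega),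
        aC_eq_zero (n := e + 1 + (e + 1 + q) + 1) (d := e + 1) (i := e + 1 + 1) (by omega),
        aC_eq (e + 1 + (e + 1 + q) + 1) (e + 1) (e + 1) (e + q + 1) 0 (q + 1) e
          (by omega) (by omega) (by omega) (by omega) (by omega) (by omega) (by omega),
        aC_eq (e + 1 + (e + 1 + q)) (e + 1) (e + 1) (e + q) 0 q e
          (by omega) (by omega) (by omega) (by omega) (by omega) (by omega) (by omega)]
      rw [fact_succ_cast (e + q), fact_succ_cast q, Nat.factorial_zero]
      push_cast
      field_simp
      ring

/-- Recurrence `(n-d-1) g_{n,d}(t) = ((2d-n+1)t + n-2) g_{n-1,d}(t) + t(n-d-2) g_{n-2,d}(t)`. -/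
theorem gPoly_recurrence_n (n d : ℕ) (hd : 1 ≤ d) (hn : d + 2 ≤ n) :
    C ((n : ℝ) - d - 1) * gPoly n d =
      (C (2 * (d : ℝ) - n + 1) * X + C ((n : ℝ) - 2)) * gPoly (n - 1) d +
        X * C ((n : ℝ) - d - 2) * gPoly (n - 2) d := by
  obtain ⟨m, rfl⟩ : ∃ m, n = d + m + 2 := ⟨n - d - 2, by omega⟩
  rw [show d + m + 2 - 1 = d + m + 1 by omega, show d + m + 2 - 2 = d + m by omega,
    show (X : Polynomial ℝ) * C (((d + m + 2 : ℕ) : ℝ) - (d : ℝ) - 2) =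
      C (((d + m + 2 : ℕ) : ℝ) - (d : ℝ) - 2) * X from mul_comm _ _]
  ext k
  simp only [add_mul, Polynomial.coeff_add, mul_assoc, Polynomial.coeff_C_mul]
  cases k with
  | zero =>
    simp only [Polynomial.mul_coeff_zero, Polynomial.coeff_X_zero, zero_mul, mul_zero,
      gPoly_coeff, aC_eq_zero (Or.inl rfl)]
    ring
  | succ k =>
    rw [Polynomial.coeff_X_mul, Polynomial.coeff_X_mul, gPoly_coeff, gPoly_coeff,
      gPoly_coeff, gPoly_coeff]
    push_cast
    linear_combination key d m k hd
end

section
/- For all integers d ≥ 1 and n ≥ d + 2, the real polynomials g_{n,d}(t) satisfy the differential recurrence (n−d−1)·g_{n,d}(t) = (d·t + n−1)·g_{n−1,d}(t) − t(t+1)·g'_{n−1,d}(t), where g' denotes the derivative with respect to t. -/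
open Polynomial

lemma coeff_gPoly (n d k : ℕ) :
    (gPoly n d).coeff k =
      if 1 ≤ k ∧ k ≤ d ∧ k ≤ n - d then
        ((Nat.factorial (n - k - 1) : ℝ) /
          ((Nat.factorial (d - k) : ℝ) * (Nat.factorial (n - d - k) : ℝ) *
            (Nat.factorial (k - 1) : ℝ)))
      else 0 := by
  unfold gPoly
  rw [finset_sum_coeff]
  simp only [coeff_C_mul, coeff_X_pow, mul_ite, mul_one, mul_zero]
  rw [Finset.sum_ite_eq (Finset.Icc 1 (min d (n-d))) k]
  simp [Finset.mem_Icc, le_min_iff, and_assoc]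

/-- Differential recurrence
`(n-d-1) g_{n,d}(t) = (d t + n - 1) g_{n-1,d}(t) - t(t+1) g'_{n-1,d}(t)`. -/
theorem gPoly_diff_recurrence_n (n d : ℕ) (hd : 1 ≤ d) (hn : d + 2 ≤ n) :
    C ((n : ℝ) - d - 1) * gPoly n d =
      (C (d : ℝ) * X + C ((n : ℝ) - 1)) * gPoly (n - 1) d -
        X * (X + 1) * derivative (gPoly (n - 1) d) := by
  have hre : (C (d:ℝ) * X + C ((n:ℝ)-1)) * gPoly (n-1) d - X*(X+1)*derivative (gPoly (n-1) d)
      = C (d:ℝ) * (X * gPoly (n-1) d) + C ((n:ℝ)-1) * gPoly (n-1) d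
        - (X * (X * derivative (gPoly (n-1) d)) + X * derivative (gPoly (n-1) d)) := by ring
  rw [hre]
  ext k
  match k with
  | 0 =>
    simp [coeff_gPoly, mul_coeff_zero]
  | 1 =>
    simp only [coeff_C_mul, coeff_sub, coeff_add, coeff_X_mul, coeff_derivative, coeff_gPoly,
      mul_coeff_zero, coeff_X_zero, zero_mul]
    rw [if_neg (by omega : ¬(1 ≤ 0 ∧ 0 ≤ d ∧ 0 ≤ n - 1 - d)),
      if_pos (by omega : 1 ≤ 1 ∧ 1 ≤ d ∧ 1 ≤ n - d),
      if_pos (by omega : 1 ≤ 1 ∧ 1 ≤ d ∧ 1 ≤ n - 1 - d)]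
    obtain ⟨p, hp⟩ := Nat.le.dest hd
    obtain ⟨q, hq⟩ := Nat.le.dest hn
    rw [show n - 1 - 1 - 1 = p + q by omega, show n - 1 - d - 1 = q by omega,
      show n - 1 - 1 = p + q + 1 by omega, show n - d - 1 = q + 1 by omega,
      show d - 1 = p by omega, show (1:ℕ) - 1 = 0 by omega]
    have h1 : (d:ℝ) = 1 + p := by exact_mod_cast hp.symm
    have h2 : (n:ℝ) = (d:ℝ) + 2 + q := by exact_mod_cast hq.symm
    rw [h2, h1]
    simp only [Nat.factorial_zero, Nat.factorial_succ]
    have fp : ((Nat.factorial p : ℝ)) ≠ 0 := by positivity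
    have fq : ((Nat.factorial q : ℝ)) ≠ 0 := by positivity
    have fpq : ((Nat.factorial (p+q) : ℝ)) ≠ 0 := by positivity
    push_cast
    field_simp
    ring
  | (i+2) =>
    simp only [coeff_C_mul, coeff_sub, coeff_add, coeff_X_mul, coeff_derivative, coeff_gPoly]
    split_ifs with hA hB hC hC2 hB2 hC3 hC4 <;> try (exfalso; omega)
    · -- full in-range case
      obtain ⟨p, hp⟩ := Nat.le.dest hA.2.1
      obtain ⟨q, hq⟩ := Nat.le.dest (show d + (i + 3) ≤ n by omega)
      rw [show n - 1 - (i+1+1) - 1 = i+p+q+1 by omega, show d - (i+1+1) = p by omega,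
        show n - 1 - d - (i+1+1) = q by omega, show i+1+1-1 = i+1 by omega,
        show n - 1 - (i+1) - 1 = i+p+q+2 by omega, show d - (i+1) = p+1 by omega,
        show n - 1 - d - (i+1) = q+1 by omega, show i+1-1 = i by omega,
        show n - (i+2) - 1 = i+p+q+2 by omega, show n - d - (i+2) = q+1 by omega]
      have h1 : (d:ℝ) = i+2+p := by exact_mod_cast hp.symm
      have h2 : (n:ℝ) = (d:ℝ)+(i+3)+q := by exact_mod_cast hq.symm
      rw [h2, h1]
      rw [show i+p+q+2 = (i+p+q+1)+1 by omega, show (p:ℕ)+1 = p+1 from rfl]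
      simp only [Nat.factorial_succ]
      have f1 : ((Nat.factorial p : ℝ)) ≠ 0 := by positivity
      have f2 : ((Nat.factorial q : ℝ)) ≠ 0 := by positivity
      have f3 : ((Nat.factorial i : ℝ)) ≠ 0 := by positivity
      have f4 : ((Nat.factorial (i+p+q+1) : ℝ)) ≠ 0 := by positivity
      push_cast
      field_simp
      ring
    · -- boundary case : n = d + i + 2
      obtain ⟨p, hp⟩ := Nat.le.dest hA.2.1
      have hn2 : n = d + i + 2 := by omega
      rw [show n - 1 - (i+1) - 1 = i+p+1 by omega, show d - (i+1) = p+1 by omega,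
        show n - 1 - d - (i+1) = 0 by omega, show i+1-1 = i by omega,
        show n - (i+2) - 1 = i+p+1 by omega, show d - (i+2) = p by omega,
        show n - d - (i+2) = 0 by omega, show i+2-1 = i+1 by omega]
      have h1 : (d:ℝ) = i+2+p := by exact_mod_cast hp.symm
      have h2 : (n:ℝ) = (d:ℝ)+i+2 := by exact_mod_cast hn2
      rw [h2, h1]
      simp only [Nat.factorial_succ, Nat.factorial_zero]
      have f1 : ((Nat.factorial p : ℝ)) ≠ 0 := by positivity
      have f3 : ((Nat.factorial i : ℝ)) ≠ 0 := by positivity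
      have f4 : ((Nat.factorial (i+p+1) : ℝ)) ≠ 0 := by positivity
      push_cast
      field_simp
      ring
    · -- d = i + 1 case
      have h1 : (d:ℝ) = i+1 := by exact_mod_cast (show d = i+1 by omega)
      rw [h1]
      ring
    · ring
end

section
/- For all integers n ≥ 3 and 2 ≤ d ≤ n−1, the real polynomials g_{n,d}(t) satisfy the differential recurrence (d−1)(n−d)·g_{n,d}(t) = ((n+1−2d)(n+1−d)·t + (n−d)² + n − 2d + 1)·g_{n,d−1}(t) − t(t+1)(n+1−2d)·g'_{n,d−1}(t), where g' denotes the derivative with respect to t. -/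
open Polynomial

noncomputable def gc (n d k : ℕ) : ℝ :=
  if 1 ≤ k ∧ k ≤ min d (n - d) then
    (Nat.factorial (n - k - 1) : ℝ) /
      ((Nat.factorial (d - k) : ℝ) * (Nat.factorial (n - d - k) : ℝ) *
        (Nat.factorial (k - 1) : ℝ))
  else 0

lemma coeff_gPoly_s3 (n d k : ℕ) : (gPoly n d).coeff k = gc n d k := by
  unfold gPoly gc
  rw [Polynomial.finset_sum_coeff]
  simp only [coeff_C_mul, coeff_X_pow, mul_ite, mul_one, mul_zero]
  rw [Finset.sum_ite_eq (Finset.Icc 1 (min d (n-d))) k]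
  simp [Finset.mem_Icc]

lemma coeff_X_mul' (p : Polynomial ℝ) (k : ℕ) :
    (X * p).coeff k = if k = 0 then 0 else p.coeff (k-1) := by
  rcases k with _|k <;> simp [coeff_X_mul]

lemma fne (m : ℕ) : ((Nat.factorial m : ℝ)) ≠ 0 :=
  Nat.cast_ne_zero.2 (Nat.factorial_ne_zero _)

set_option maxHeartbeats 2000000 in
/-- Differential recurrence
`(d-1)(n-d) g_{n,d} = ((n+1-2d)(n+1-d) t + (n-d)^2 + n - 2d + 1) g_{n,d-1}
  - t(t+1)(n+1-2d) g'_{n,d-1}` for `n ≥ 3` and `2 ≤ d ≤ n-1`. -/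
theorem gPoly_diff_recurrence_d (n d : ℕ) (hn : 3 ≤ n) (hd : 2 ≤ d) (hd2 : d ≤ n - 1) :
    C (((d : ℝ) - 1) * ((n : ℝ) - d)) * gPoly n d =
      (C (((n : ℝ) + 1 - 2 * d) * ((n : ℝ) + 1 - d)) * X +
          C (((n : ℝ) - d) ^ 2 + (n : ℝ) - 2 * d + 1)) * gPoly n (d - 1) -
        X * (X + 1) * C ((n : ℝ) + 1 - 2 * d) * derivative (gPoly n (d - 1)) := by
  obtain ⟨e, rfl⟩ : ∃ e, d = e + 1 := ⟨d - 1, by omega⟩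
  have he1 : 1 ≤ e := by omega
  have he2 : e + 2 ≤ n := by omega
  simp only [Nat.add_sub_cancel]
  set A : ℝ := ((n : ℝ) + 1 - 2 * ((e:ℝ)+1)) * ((n : ℝ) + 1 - ((e:ℝ)+1)) with hA
  set B : ℝ := ((n : ℝ) - ((e:ℝ)+1)) ^ 2 + (n : ℝ) - 2 * ((e:ℝ)+1) + 1 with hB
  set E : ℝ := (n : ℝ) + 1 - 2 * ((e:ℝ)+1) with hE
  set G : Polynomial ℝ := gPoly n e with hG
  have hre : (C A * X + C B) * G - X * (X + 1) * C E * derivative G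
      = C A * (X * G) + C B * G - C E * (X * (X * derivative G)) - C E * (X * derivative G) := by
    ring
  push_cast
  rw [hre]
  ext k
  simp only [coeff_sub, coeff_add, coeff_C_mul]
  match k with
  | 0 =>
    simp [hG, coeff_gPoly_s3, gc, mul_coeff_zero]
  | 1 =>
    simp only [coeff_X_mul', coeff_derivative, hG, coeff_gPoly_s3]
    norm_num
    rw [hA, hB, hE]
    have hz : gc n e 0 = 0 := by simp [gc]
    rw [hz]
    rw [show gc n (e+1) 1 = (Nat.factorial (n - 1 - 1) : ℝ) /
        ((Nat.factorial ((e+1) - 1) : ℝ) * (Nat.factorial (n - (e+1) - 1) : ℝ) *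
          (Nat.factorial (1 - 1) : ℝ)) from by rw [gc, if_pos ⟨le_refl 1, by omega⟩]]
    rw [show gc n e 1 = (Nat.factorial (n - 1 - 1) : ℝ) /
        ((Nat.factorial (e - 1) : ℝ) * (Nat.factorial (n - e - 1) : ℝ) *
          (Nat.factorial (1 - 1) : ℝ)) from by rw [gc, if_pos ⟨le_refl 1, by omega⟩]]
    obtain ⟨u, rfl⟩ : ∃ u, e = u + 1 := ⟨e - 1, by omega⟩
    obtain ⟨w, rfl⟩ : ∃ w, n = u + w + 3 := ⟨n - u - 3, by omega⟩
    rw [show u + w + 3 - 1 - 1 = u + w + 1 from by omega,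
        show u + 1 + 1 - 1 = u + 1 from by omega,
        show u + w + 3 - (u + 1 + 1) - 1 = w from by omega,
        show (1:ℕ) - 1 = 0 from rfl,
        show u + 1 - 1 = u from by omega,
        show u + w + 3 - (u + 1) - 1 = w + 1 from by omega]
    simp only [Nat.factorial_succ, Nat.factorial_zero]
    push_cast
    have := fne u; have := fne w; have := fne (u+w+1)
    field_simp
    ring
  | (i+2) =>
    simp only [coeff_X_mul', coeff_derivative, hG, coeff_gPoly_s3]
    norm_num
    simp only [show i + 1 + 1 = i + 2 from by omega]
    rw [hA, hB, hE]
    simp only [gc]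
    split_ifs with hc1 hc2 hc3 hc4 hc5 hc6 hc7
    · -- main case TTT
      obtain ⟨p, rfl⟩ : ∃ p, e = i + 2 + p := ⟨e - (i+2), by omega⟩
      obtain ⟨q, rfl⟩ : ∃ q, n = 2*i + p + q + 5 := ⟨n - (2*i+p+5), by omega⟩
      rw [show 2*i + p + q + 5 - (i + 2) - 1 = i + p + q + 2 from by omega,
          show i + 2 + p + 1 - (i + 2) = p + 1 from by omega,
          show 2*i + p + q + 5 - (i + 2 + p + 1) - (i + 2) = q from by omega,
          show i + 2 - 1 = i + 1 from by omega,
          show 2*i + p + q + 5 - (i + 1) - 1 = i + p + q + 2 + 1 from by omega,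
          show i + 2 + p - (i + 1) = p + 1 from by omega,
          show 2*i + p + q + 5 - (i + 2 + p) - (i + 1) = q + 1 + 1 from by omega,
          show i + 1 - 1 = i from by omega,
          show i + 2 + p - (i + 2) = p from by omega,
          show 2*i + p + q + 5 - (i + 2 + p) - (i + 2) = q + 1 from by omega]
      simp only [Nat.factorial_succ]
      push_cast
      have := fne i; have := fne p; have := fne q; have := fne (i+p+q+2)
      field_simp
      ring
    · -- TTF : k = e+1
      obtain rfl : e = i + 1 := by omega
      obtain ⟨q, rfl⟩ : ∃ q, n = 2*i + q + 4 := ⟨n - (2*i+4), by omega⟩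
      rw [show 2*i + q + 4 - (i + 2) - 1 = i + q + 1 from by omega,
          show i + 1 + 1 - (i + 2) = 0 from by omega,
          show 2*i + q + 4 - (i + 1 + 1) - (i + 2) = q from by omega,
          show i + 2 - 1 = i + 1 from by omega,
          show 2*i + q + 4 - (i + 1) - 1 = i + q + 1 + 1 from by omega,
          show i + 1 - (i + 1) = 0 from by omega,
          show 2*i + q + 4 - (i + 1) - (i + 1) = q + 1 + 1 from by omega,
          show i + 1 - 1 = i from by omega]
      simp only [Nat.factorial_succ, Nat.factorial_zero]
      push_cast
      have := fne i; have := fne q; have := fne (i+q+1)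
      field_simp
      ring
    · exfalso; omega
    · exfalso; omega
    · -- FTT : n - e = i + 2
      obtain ⟨u, rfl⟩ : ∃ u, e = i + 2 + u := ⟨e - (i+2), by omega⟩
      obtain rfl : n = 2*i + u + 4 := by omega
      rw [show 2*i + u + 4 - (i + 1) - 1 = i + u + 1 + 1 from by omega,
          show i + 2 + u - (i + 1) = u + 1 from by omega,
          show 2*i + u + 4 - (i + 2 + u) - (i + 1) = 1 from by omega,
          show i + 1 - 1 = i from by omega,
          show 2*i + u + 4 - (i + 2) - 1 = i + u + 1 from by omega,
          show i + 2 + u - (i + 2) = u from by omega,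
          show 2*i + u + 4 - (i + 2 + u) - (i + 2) = 0 from by omega,
          show i + 2 - 1 = i + 1 from by omega]
      simp only [Nat.factorial_succ, Nat.factorial_zero, Nat.factorial_one]
      push_cast
      have := fne i; have := fne u; have := fne (i+u+1)
      field_simp
      ring
    · -- FTF
      have h5a : i + 1 ≤ e := hc5.2.trans (min_le_left _ _)
      have h5b : i + 1 ≤ n - e := hc5.2.trans (min_le_right _ _)
      have h6 : e < i + 2 ∨ n - e < i + 2 :=
        min_lt_iff.1 (not_le.1 fun h => hc6 ⟨by omega, h⟩)
      have h1 : e + 1 < i + 2 ∨ n - (e + 1) < i + 2 :=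
        min_lt_iff.1 (not_le.1 fun h => hc1 ⟨by omega, h⟩)
      rcases (by omega : n = e + (i + 1) ∨ n = 2*e + 1) with h | h
      · rw [show ((n:ℕ):ℝ) = (e:ℝ) + (i:ℝ) + 1 from by exact_mod_cast h]
        ring
      · rw [show ((n:ℕ):ℝ) = 2*(e:ℝ) + 1 from by exact_mod_cast h]
        ring
    · exfalso; omega
    · ring
end

section
/- For all integers n ≥ 3 and 2 ≤ d ≤ n−1, the real polynomials g_{n,d}(t) satisfy the triangular recurrence (d−1)·g_{n,d}(t) = (n−d)·g_{n,d−1}(t) + t(n+1−2d)·g_{n−1,d−1}(t). -/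
open Polynomial

/-- Triangular recurrence
`(d-1) g_{n,d}(t) = (n-d) g_{n,d-1}(t) + t(n+1-2d) g_{n-1,d-1}(t)`. -/
theorem gPoly_triangular_recurrence₁ (n d : ℕ) (hn : 3 ≤ n) (hd : 2 ≤ d) (hd2 : d ≤ n - 1) :
    C ((d : ℝ) - 1) * gPoly n d =
      C ((n : ℝ) - d) * gPoly n (d - 1) +
        X * C ((n : ℝ) + 1 - 2 * d) * gPoly (n - 1) (d - 1) := by
  ext k
  rw [Polynomial.coeff_add, Polynomial.coeff_C_mul, Polynomial.coeff_C_mul, mul_assoc X]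
  cases k with
  | zero =>
    simp [coeff_gPoly, Polynomial.mul_coeff_zero]
  | succ m =>
    rw [Polynomial.coeff_X_mul, Polynomial.coeff_C_mul, coeff_gPoly, coeff_gPoly, coeff_gPoly]
    split_ifs with h1 h2 h3 h3 h2 h3 h3
    · -- interior: 2 ≤ m+1 ≤ min (d-1) (n-d)
      obtain ⟨c, hc⟩ : ∃ c, m = c + 1 := ⟨m - 1, by omega⟩
      obtain ⟨a, ha⟩ : ∃ a, d = m + 2 + a := ⟨d - m - 2, by omega⟩
      obtain ⟨b, hb⟩ : ∃ b, n = d + m + 1 + b := ⟨n - d - m - 1, by omega⟩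
      have e1 : n - (m+1) - 1 = a + b + c + 2 := by omega
      have e2 : d - (m+1) = a + 1 := by omega
      have e3 : n - d - (m+1) = b := by omega
      have e4 : (m+1) - 1 = c + 1 := by omega
      have e5 : d - 1 - (m+1) = a := by omega
      have e6 : n - (d-1) - (m+1) = b + 1 := by omega
      have e7 : (n-1) - m - 1 = a + b + c + 2 := by omega
      have e8 : (d-1) - m = a + 1 := by omega
      have e9 : (n-1) - (d-1) - m = b + 1 := by omega
      have e10 : m - 1 = c := by omega
      rw [e1, e2, e3, e4, e5, e6, e7, e8, e9, e10]
      have hdr : (d:ℝ) = (c:ℝ) + 3 + a := by rw [ha, hc]; push_cast; ring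
      have hnr : (n:ℝ) = 2*(c:ℝ) + 5 + a + b := by rw [hb, ha, hc]; push_cast; ring
      rw [hdr, hnr, Nat.factorial_succ a, Nat.factorial_succ b, Nat.factorial_succ c]
      have fa : ((a.factorial : ℝ)) ≠ 0 := Nat.cast_ne_zero.mpr a.factorial_ne_zero
      have fb : ((b.factorial : ℝ)) ≠ 0 := Nat.cast_ne_zero.mpr b.factorial_ne_zero
      have fc : ((c.factorial : ℝ)) ≠ 0 := Nat.cast_ne_zero.mpr c.factorial_ne_zero
      have ha1 : ((a:ℝ) + 1) ≠ 0 := by positivity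
      have hb1 : ((b:ℝ) + 1) ≠ 0 := by positivity
      have hc1 : ((c:ℝ) + 1) ≠ 0 := by positivity
      push_cast
      field_simp
      ring
    · -- k = 1
      have hm : m = 0 := by omega
      subst hm
      obtain ⟨a, ha⟩ : ∃ a, d = a + 2 := ⟨d - 2, by omega⟩
      obtain ⟨b, hb⟩ : ∃ b, n = d + 1 + b := ⟨n - d - 1, by omega⟩
      have e1 : n - (0+1) - 1 = a + b + 1 := by omega
      have e2 : d - (0+1) = a + 1 := by omega
      have e3 : n - d - (0+1) = b := by omega
      have e4 : (0+1) - 1 = 0 := by omega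
      have e5 : d - 1 - (0+1) = a := by omega
      have e6 : n - (d-1) - (0+1) = b + 1 := by omega
      rw [e1, e5, e6, e3, e2, e4]
      have hdr : (d:ℝ) = (a:ℝ) + 2 := by rw [ha]; push_cast; ring
      have hnr : (n:ℝ) = (a:ℝ) + b + 3 := by rw [hb, ha]; push_cast; ring
      rw [hdr, hnr, Nat.factorial_succ a, Nat.factorial_succ b]
      have fa : ((a.factorial : ℝ)) ≠ 0 := Nat.cast_ne_zero.mpr a.factorial_ne_zero
      have fb : ((b.factorial : ℝ)) ≠ 0 := Nat.cast_ne_zero.mpr b.factorial_ne_zero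
      have ha1 : ((a:ℝ) + 1) ≠ 0 := by positivity
      have hb1 : ((b:ℝ) + 1) ≠ 0 := by positivity
      push_cast
      field_simp
      ring
    · -- k = d ≤ n - d
      have hm : m + 1 = d := by omega
      obtain ⟨c, hcc⟩ : ∃ c, d = c + 2 := ⟨d - 2, by omega⟩
      obtain ⟨b, hb⟩ : ∃ b, n = 2*d + b := ⟨n - 2*d, by omega⟩
      have e1 : n - (m+1) - 1 = b + c + 1 := by omega
      have e2 : d - (m+1) = 0 := by omega
      have e3 : n - d - (m+1) = b := by omega
      have e4 : (m+1) - 1 = c + 1 := by omega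
      have e7 : (n-1) - m - 1 = b + c + 1 := by omega
      have e8 : (d-1) - m = 0 := by omega
      have e9 : (n-1) - (d-1) - m = b + 1 := by omega
      have e10 : m - 1 = c := by omega
      rw [e1, e2, e3, e4, e7, e8, e9, e10]
      have hdr : (d:ℝ) = (c:ℝ) + 2 := by rw [hcc]; push_cast; ring
      have hnr : (n:ℝ) = 2*(c:ℝ) + 4 + b := by rw [hb, hcc]; push_cast; ring
      rw [hdr, hnr, Nat.factorial_succ b, Nat.factorial_succ c]
      have fb : ((b.factorial : ℝ)) ≠ 0 := Nat.cast_ne_zero.mpr b.factorial_ne_zero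
      have fc : ((c.factorial : ℝ)) ≠ 0 := Nat.cast_ne_zero.mpr c.factorial_ne_zero
      have hb1 : ((b:ℝ) + 1) ≠ 0 := by positivity
      have hc1 : ((c:ℝ) + 1) ≠ 0 := by positivity
      push_cast
      field_simp
      ring
    · exfalso; omega
    · -- k = n - d + 1 ≤ d - 1
      have hk : m + 1 = n - d + 1 := by omega
      obtain ⟨c, hcc⟩ : ∃ c, m = c + 1 := ⟨m - 1, by omega⟩
      obtain ⟨a, ha⟩ : ∃ a, d = m + 2 + a := ⟨d - m - 2, by omega⟩
      have hne : n = d + m := by omega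
      have e1 : n - (m+1) - 1 = a + c + 1 := by omega
      have e4 : (m+1) - 1 = c + 1 := by omega
      have e5 : d - 1 - (m+1) = a := by omega
      have e6 : n - (d-1) - (m+1) = 0 := by omega
      have e7 : (n-1) - m - 1 = a + c + 1 := by omega
      have e8 : (d-1) - m = a + 1 := by omega
      have e9 : (n-1) - (d-1) - m = 0 := by omega
      have e10 : m - 1 = c := by omega
      rw [e1, e4, e5, e6, e7, e8, e9, e10]
      have hdr : (d:ℝ) = (c:ℝ) + 3 + a := by rw [ha, hcc]; push_cast; ring
      have hnr : (n:ℝ) = (a:ℝ) + 2*c + 4 := by rw [hne, ha, hcc]; push_cast; ring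
      rw [hdr, hnr, Nat.factorial_succ a, Nat.factorial_succ c]
      have fa : ((a.factorial : ℝ)) ≠ 0 := Nat.cast_ne_zero.mpr a.factorial_ne_zero
      have fc : ((c.factorial : ℝ)) ≠ 0 := Nat.cast_ne_zero.mpr c.factorial_ne_zero
      have ha1 : ((a:ℝ) + 1) ≠ 0 := by positivity
      have hc1 : ((c:ℝ) + 1) ≠ 0 := by positivity
      push_cast
      field_simp
      ring
    · exfalso; omega
    · -- k = d = n - d + 1, coefficient vanishes
      have h2d : n + 1 = 2 * d := by omega
      have : (n:ℝ) + 1 - 2 * d = 0 := by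
        have : ((n:ℝ) + 1) = 2 * d := by exact_mod_cast congrArg (Nat.cast : ℕ → ℝ) h2d
        linarith
      rw [this]
      ring
    · ring
end

section
/- For every integer d ≥ 1, the real polynomials g_{n,d}(t) satisfy (d+1)(2d−1)·g_{2d+3,d+1}(t) = 2(2d²·t + 4d² − 1)·g_{2d+1,d}(t) − (2d+1)(d−1)·t²·g_{2d−1,d−1}(t), with the convention g_{1,0}(t) = 0. -/
open Polynomial

lemma coeff_gsum (m : ℕ) (f : ℕ → ℝ) (k : ℕ) :
    (∑ i ∈ Finset.Icc 1 m, C (f i) * X ^ i).coeff k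
      = if k ∈ Finset.Icc 1 m then f k else 0 := by
  rw [Polynomial.finset_sum_coeff]
  simp only [Polynomial.coeff_C_mul, Polynomial.coeff_X_pow]
  rw [← Finset.sum_ite_eq' (Finset.Icc 1 m) k f]
  apply Finset.sum_congr rfl
  intro i _
  by_cases h : i = k
  · simp [h]
  · rw [if_neg h, if_neg (fun hh => h hh.symm)]
    simp

set_option maxHeartbeats 2000000 in
/-- `(d+1)(2d-1) g_{2d+3,d+1}(t) = 2(2d^2 t + 4d^2 - 1) g_{2d+1,d}(t)
  - (2d+1)(d-1) t^2 g_{2d-1,d-1}(t)` for `d ≥ 1`, with the convention `g_{1,0}(t) = 0`. -/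
theorem gPoly_recurrence_diag₂ (d : ℕ) (hd : 1 ≤ d) :
    C (((d : ℝ) + 1) * (2 * (d : ℝ) - 1)) * gPoly (2 * d + 3) (d + 1) =
      C 2 * (C (2 * (d : ℝ) ^ 2) * X + C (4 * (d : ℝ) ^ 2 - 1)) * gPoly (2 * d + 1) d -
        C ((2 * (d : ℝ) + 1) * ((d : ℝ) - 1)) * X ^ 2 * gPoly (2 * d - 1) (d - 1) := by
  rw [show (C 2 * (C (2*(d:ℝ)^2) * X + C (4*(d:ℝ)^2-1)) * gPoly (2*d+1) d)
      = C (4*(d:ℝ)^2) * (gPoly (2*d+1) d * X ^ 1) + C (8*(d:ℝ)^2-2) * gPoly (2*d+1) d from by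
        simp only [map_mul, map_sub, map_add, map_pow, map_ofNat, map_one]; ring,
     show (C ((2*(d:ℝ)+1) * ((d:ℝ)-1)) * X ^ 2 * gPoly (2*d-1) (d-1))
      = C ((2*(d:ℝ)+1) * ((d:ℝ)-1)) * (gPoly (2*d-1) (d-1) * X ^ 2) from by ring]
  ext k
  simp only [Polynomial.coeff_sub, Polynomial.coeff_add, Polynomial.coeff_C_mul,
    Polynomial.coeff_mul_X_pow', gPoly, coeff_gsum]
  simp only [show (d+1) ⊓ (2*d+3-(d+1)) = d+1 from by omega,
    show d ⊓ (2*d+1-d) = d from by omega,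
    show (d-1) ⊓ (2*d-1-(d-1)) = d-1 from by omega,
    show 2*d+3-(d+1) = d+2 from by omega,
    show 2*d+1-d = d+1 from by omega,
    show 2*d-1-(d-1) = d from by omega,
    Finset.mem_Icc]
  split_ifs with h1 h2 h3 h4 h5 h6 h7 h8 h9 h10 h11 h12 <;>
    first
      | (exfalso; omega)
      | norm_num
      | skip
  -- case 3 ≤ k ≤ d : all four terms present
  · obtain ⟨c, rfl⟩ : ∃ c, k = c + 3 := ⟨k - 3, by omega⟩
    obtain ⟨a, rfl⟩ : ∃ a, d = c + 3 + a := ⟨d - (c+3), by omega⟩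
    simp only [show 2 * (c + 3 + a) + 3 - (c + 3) - 1 = 2*a+c+5 from by omega,
      show c + 3 + a + 1 - (c + 3) = a + 1 from by omega,
      show c + 3 + a + 2 - (c + 3) = a + 2 from by omega,
      show c + 3 - 1 = c + 2 from by omega,
      show 2 * (c + 3 + a) + 1 - (c + 3 - 1) - 1 = 2*a+c+4 from by omega,
      show c + 3 + a - (c + 3 - 1) = a + 1 from by omega,
      show c + 3 + a + 1 - (c + 3 - 1) = a + 2 from by omega,
      show c + 3 - 1 - 1 = c + 1 from by omega,
      show 2 * (c + 3 + a) + 1 - (c + 3) - 1 = 2*a+c+3 from by omega,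
      show c + 3 + a - (c + 3) = a from by omega,
      show 2 * (c + 3 + a) - 1 - (c + 3 - 2) - 1 = 2*a+c+3 from by omega,
      show c + 3 + a - 1 - (c + 3 - 2) = a + 1 from by omega,
      show c + 3 + a - (c + 3 - 2) = a + 2 from by omega,
      show c + 3 - 2 - 1 = c from by omega,
      show 2 * (c + 3 + a) + 1 - (c + 2) - 1 = 2*a+c+4 from by omega,
      show c + 3 + a - (c + 2) = a + 1 from by omega,
      show c + 3 + a + 1 - (c + 2) = a + 2 from by omega,
      show c + 2 - 1 = c + 1 from by omega]
    rw [show ((2*a+c+5).factorial : ℝ) = (2*(a:ℝ)+c+5) * (2*(a:ℝ)+c+4) * ((2*a+c+3).factorial : ℝ) from by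
        rw [show 2*a+c+5 = 2*a+c+3+1+1 from by omega]; push_cast [Nat.factorial_succ]; ring,
      show ((2*a+c+4).factorial : ℝ) = (2*(a:ℝ)+c+4) * ((2*a+c+3).factorial : ℝ) from by
        rw [show 2*a+c+4 = 2*a+c+3+1 from by omega]; push_cast [Nat.factorial_succ]; ring,
      show ((a+2).factorial : ℝ) = ((a:ℝ)+2) * ((a:ℝ)+1) * (a.factorial : ℝ) from by
        push_cast [Nat.factorial_succ]; ring,
      show ((a+1).factorial : ℝ) = ((a:ℝ)+1) * (a.factorial : ℝ) from by
        push_cast [Nat.factorial_succ]; ring,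
      show ((c+2).factorial : ℝ) = ((c:ℝ)+2) * ((c:ℝ)+1) * (c.factorial : ℝ) from by
        push_cast [Nat.factorial_succ]; ring,
      show ((c+1).factorial : ℝ) = ((c:ℝ)+1) * (c.factorial : ℝ) from by
        push_cast [Nat.factorial_succ]; ring]
    have ha : (a.factorial : ℝ) ≠ 0 := Nat.cast_ne_zero.2 (Nat.factorial_pos _).ne'
    have hc : (c.factorial : ℝ) ≠ 0 := Nat.cast_ne_zero.2 (Nat.factorial_pos _).ne'
    push_cast
    field_simp
    ring
  -- case k = 2, 2 ≤ d
  · obtain rfl : k = 2 := by omega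
    obtain ⟨a, rfl⟩ : ∃ a, d = a + 2 := ⟨d - 2, by omega⟩
    simp only [show 2 * (a + 2) + 3 - 2 - 1 = 2*a+4 from by omega,
      show a + 2 + 1 - 2 = a + 1 from by omega,
      show a + 2 + 2 - 2 = a + 2 from by omega,
      show (2:ℕ) - 1 = 1 from by omega,
      show 2 * (a + 2) + 1 - 1 - 1 = 2*a+3 from by omega,
      show a + 2 - 1 = a + 1 from by omega,
      show a + 2 + 1 - 1 = a + 2 from by omega,
      show (1:ℕ) - 1 = 0 from by omega,
      show 2 * (a + 2) + 1 - 2 - 1 = 2*a+2 from by omega,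
      show a + 2 - 2 = a from by omega,
      Nat.factorial_zero, Nat.factorial_one]
    rw [show ((2*a+4).factorial : ℝ) = (2*(a:ℝ)+4) * (2*(a:ℝ)+3) * ((2*a+2).factorial : ℝ) from by
        rw [show 2*a+4 = 2*a+2+1+1 from by omega]; push_cast [Nat.factorial_succ]; ring,
      show ((2*a+3).factorial : ℝ) = (2*(a:ℝ)+3) * ((2*a+2).factorial : ℝ) from by
        rw [show 2*a+3 = 2*a+2+1 from by omega]; push_cast [Nat.factorial_succ]; ring,
      show ((a+2).factorial : ℝ) = ((a:ℝ)+2) * ((a:ℝ)+1) * (a.factorial : ℝ) from by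
        push_cast [Nat.factorial_succ]; ring,
      show ((a+1).factorial : ℝ) = ((a:ℝ)+1) * (a.factorial : ℝ) from by
        push_cast [Nat.factorial_succ]; ring]
    have ha : (a.factorial : ℝ) ≠ 0 := Nat.cast_ne_zero.2 (Nat.factorial_pos _).ne'
    push_cast
    field_simp
    ring
  -- case k = d + 1, d ≥ 2
  · obtain ⟨a, rfl⟩ : ∃ a, d = a + 2 := ⟨d - 2, by omega⟩
    obtain rfl : k = a + 3 := by omega
    simp only [show 2 * (a + 2) + 3 - (a + 3) - 1 = a + 3 from by omega,
      show a + 2 + 1 - (a + 3) = 0 from by omega,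
      show a + 2 + 2 - (a + 3) = 1 from by omega,
      show a + 3 - 1 = a + 2 from by omega,
      show 2 * (a + 2) + 1 - (a + 2) - 1 = a + 2 from by omega,
      show a + 2 - (a + 2) = 0 from by omega,
      show a + 2 + 1 - (a + 2) = 1 from by omega,
      show a + 2 - 1 = a + 1 from by omega,
      show a + 3 - 2 = a + 1 from by omega,
      show 2 * (a + 2) - 1 - (a + 1) - 1 = a + 1 from by omega,
      show a + 2 - 1 - (a + 1) = 0 from by omega,
      show a + 2 - (a + 1) = 1 from by omega,
      show a + 1 - 1 = a from by omega,
      Nat.factorial_zero, Nat.factorial_one, Nat.sub_self]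
    rw [show ((a+3).factorial : ℝ) = ((a:ℝ)+3) * ((a:ℝ)+2) * ((a:ℝ)+1) * (a.factorial : ℝ) from by
        push_cast [Nat.factorial_succ]; ring,
      show ((a+2).factorial : ℝ) = ((a:ℝ)+2) * ((a:ℝ)+1) * (a.factorial : ℝ) from by
        push_cast [Nat.factorial_succ]; ring,
      show ((a+1).factorial : ℝ) = ((a:ℝ)+1) * (a.factorial : ℝ) from by
        push_cast [Nat.factorial_succ]; ring]
    have ha : (a.factorial : ℝ) ≠ 0 := Nat.cast_ne_zero.2 (Nat.factorial_pos _).ne'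
    push_cast
    field_simp
    ring
  -- case d = 1, k = 2
  · obtain rfl : d = 1 := by omega
    obtain rfl : k = 2 := by omega
    norm_num [Nat.factorial]
  -- case k = 1
  · obtain rfl : k = 1 := by omega
    obtain ⟨a, rfl⟩ : ∃ a, d = a + 1 := ⟨d - 1, by omega⟩
    simp only [show 2 * (a + 1) + 3 - 1 - 1 = 2*a+3 from by omega,
      show a + 1 + 1 - 1 = a + 1 from by omega,
      show a + 1 + 2 - 1 = a + 2 from by omega,
      show (1:ℕ) - 1 = 0 from by omega,
      show 2 * (a + 1) + 1 - 1 - 1 = 2*a+1 from by omega,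
      show a + 1 - 1 = a from by omega,
      Nat.factorial_zero, Nat.factorial_one]
    rw [show ((2*a+3).factorial : ℝ) = (2*(a:ℝ)+3) * (2*(a:ℝ)+2) * ((2*a+1).factorial : ℝ) from by
        rw [show 2*a+3 = 2*a+1+1+1 from by omega]; push_cast [Nat.factorial_succ]; ring,
      show ((a+2).factorial : ℝ) = ((a:ℝ)+2) * ((a:ℝ)+1) * (a.factorial : ℝ) from by
        push_cast [Nat.factorial_succ]; ring,
      show ((a+1).factorial : ℝ) = ((a:ℝ)+1) * (a.factorial : ℝ) from by
        push_cast [Nat.factorial_succ]; ring]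
    have ha : (a.factorial : ℝ) ≠ 0 := Nat.cast_ne_zero.2 (Nat.factorial_pos _).ne'
    have h21 : ((2*a+1).factorial : ℝ) ≠ 0 := Nat.cast_ne_zero.2 (Nat.factorial_pos _).ne'
    push_cast
    field_simp
    ring
end

section
/- For every integer d ≥ 1, the real polynomials g_{n,d}(t) satisfy d·g_{2d+1,d}(t) = (2d−1)·g_{2d,d}(t) + (d−1)·t·g_{2d−1,d−1}(t), with the convention g_{1,0}(t) = 0. -/
open Polynomial

/-- `d g_{2d+1,d}(t) = (2d-1) g_{2d,d}(t) + (d-1) t g_{2d-1,d-1}(t)` for `d ≥ 1`,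
with the convention `g_{1,0}(t) = 0`. -/
theorem gPoly_recurrence_diag₃ (d : ℕ) (hd : 1 ≤ d) :
    C (d : ℝ) * gPoly (2 * d + 1) d =
      C (2 * (d : ℝ) - 1) * gPoly (2 * d) d +
        C ((d : ℝ) - 1) * X * gPoly (2 * d - 1) (d - 1) := by
  obtain ⟨e, rfl⟩ : ∃ e, d = e + 1 := ⟨d - 1, by omega⟩
  unfold gPoly
  rw [show min (e+1) (2*(e+1)+1 - (e+1)) = e+1 by omega,
      show min (e+1) (2*(e+1) - (e+1)) = e+1 by omega,
      show min ((e+1)-1) (2*(e+1)-1 - ((e+1)-1)) = e by omega,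
      show Finset.Icc 1 (e+1) = Finset.Ico 1 (e+2) by exact (Finset.Ico_add_one_right_eq_Icc (a := 1) (b := e+1)).symm,
      show Finset.Icc 1 e = Finset.Ico 1 (e+1) by rw [Finset.Ico_add_one_right_eq_Icc],
      Finset.sum_Ico_eq_sum_range, Finset.sum_Ico_eq_sum_range, Finset.sum_Ico_eq_sum_range,
      show e+2-1 = e+1 by omega, show e+1-1 = e by omega]
  rw [Finset.mul_sum, Finset.mul_sum, Finset.mul_sum,
      Finset.sum_range_succ', Finset.sum_range_succ', add_right_comm,
      ← Finset.sum_add_distrib]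
  congr 1
  · apply Finset.sum_congr rfl
    intro i hi
    have hie : i < e := Finset.mem_range.mp hi
    -- indices
    have k1 : 2*(e+1)+1 - (1+(i+1)) - 1 = 2*e - i := by omega
    have k2 : e+1 - (1+(i+1)) = e-1-i := by omega
    have k3 : 2*(e+1)+1 - (e+1) - (1+(i+1)) = e-i := by omega
    have k4 : 1+(i+1) - 1 = i+1 := by omega
    have k5 : 2*(e+1) - (1+(i+1)) - 1 = 2*e-i-1 := by omega
    have k6 : 2*(e+1) - (e+1) - (1+(i+1)) = e-1-i := by omega
    have k7 : 2*(e+1)-1 - (1+i) - 1 = 2*e-i-1 := by omega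
    have k8 : e - (1+i) = e-1-i := by omega
    have k9 : 2*(e+1)-1 - e - (1+i) = e-i := by omega
    have k10 : 1+i-1 = i := by omega
    rw [k1, k2, k3, k4, k5, k6, k7, k8, k9, k10]
    have hx : C ((e:ℝ)+1-1) * X * (C (((2*e-i-1).factorial : ℝ) /
        (((e-1-i).factorial : ℝ) * ((e-i).factorial : ℝ) * ((i).factorial : ℝ))) * X ^ (1+i))
        = C (((e:ℝ)+1-1) * (((2*e-i-1).factorial : ℝ) /
        (((e-1-i).factorial : ℝ) * ((e-i).factorial : ℝ) * ((i).factorial : ℝ)))) * X ^ (1+(i+1)) := by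
      rw [C_mul]; ring
    push_cast
    rw [hx, ← mul_assoc, ← mul_assoc, ← C_mul, ← C_mul, ← add_mul, ← C_add]
    congr 1
    -- factorial expansions
    have f1 : ((2*e-i).factorial : ℝ) = (2*e-i : ℕ) * ((2*e-i-1).factorial : ℝ) := by
      rw [show 2*e-i = (2*e-i-1)+1 by omega, Nat.factorial_succ]; push_cast; ring
    have f2 : ((e-i).factorial : ℝ) = (e-i : ℕ) * ((e-1-i).factorial : ℝ) := by
      rw [show e-i = (e-1-i)+1 by omega, Nat.factorial_succ]
      rw [show e-1-i = (e-i)-1 by omega]; push_cast; ring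
    have f3 : ((i+1).factorial : ℝ) = (i+1) * ((i).factorial : ℝ) := by
      rw [Nat.factorial_succ]; push_cast; ring
    have c1 : ((2*e-i : ℕ) : ℝ) = 2*(e:ℝ) - i := by
      have : i ≤ 2*e := by omega
      push_cast [Nat.cast_sub this]; ring
    have c2 : ((e-i : ℕ) : ℝ) = (e:ℝ) - i := by
      have : i ≤ e := by omega
      push_cast [Nat.cast_sub this]; ring
    have p1 : ((2*e-i-1).factorial : ℝ) ≠ 0 := Nat.cast_ne_zero.mpr (Nat.factorial_ne_zero _)
    have p2 : ((e-1-i).factorial : ℝ) ≠ 0 := Nat.cast_ne_zero.mpr (Nat.factorial_ne_zero _)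
    have p3 : ((i).factorial : ℝ) ≠ 0 := Nat.cast_ne_zero.mpr (Nat.factorial_ne_zero _)
    have p4 : ((e:ℝ) - i) ≠ 0 := by
      have : (i:ℝ) < e := by exact_mod_cast hie
      intro h; nlinarith
    have p5 : ((i:ℝ)+1) ≠ 0 := by positivity
    rw [f1, f2, f3, c1, c2]
    field_simp
    ring
  · -- the i = 0 terms
    rw [show 2*(e+1)+1 - (1+0) - 1 = 2*e+1 by omega,
        show e+1 - (1+0) = e by omega,
        show 2*(e+1)+1 - (e+1) - (1+0) = e+1 by omega,
        show 1+0-1 = 0 by omega,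
        show 2*(e+1) - (1+0) - 1 = 2*e by omega,
        show 2*(e+1) - (e+1) - (1+0) = e by omega]
    rw [← mul_assoc, ← mul_assoc, ← C_mul, ← C_mul]
    congr 1
    have f1 : ((2*e+1).factorial : ℝ) = (2*(e:ℝ)+1) * ((2*e).factorial : ℝ) := by
      rw [Nat.factorial_succ]; push_cast; ring
    have f2 : ((e+1).factorial : ℝ) = ((e:ℝ)+1) * ((e).factorial : ℝ) := by
      rw [Nat.factorial_succ]; push_cast; ring
    have p2 : ((e).factorial : ℝ) ≠ 0 := Nat.cast_ne_zero.mpr (Nat.factorial_ne_zero _)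
    have p5 : ((e:ℝ)+1) ≠ 0 := by positivity
    rw [f1, f2]
    push_cast
    rw [Nat.factorial_zero]
    field_simp
    ring
end

section
/- For every integer d ≥ 1, the real polynomials g_{n,d}(t) satisfy g_{2d+2,d+1}(t) = 2·g_{2d+1,d}(t) + t·g_{2d,d}(t). -/
open Polynomial

lemma factR_ne (n : ℕ) : (Nat.factorial n : ℝ) ≠ 0 := by
  exact_mod_cast (Nat.factorial_pos n).ne'

lemma sum_icc_one (f : ℕ → Polynomial ℝ) (n : ℕ) :
    ∑ i ∈ Finset.Icc 1 n, f i = ∑ i ∈ Finset.range n, f (i + 1) := by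
  rw [← Finset.Ico_add_one_right_eq_Icc, Finset.sum_Ico_eq_sum_range]
  simp [Nat.add_comm]

-- core numeric identity
lemma key_s9 (i k : ℕ) :
    ((i + 2*k + 3).factorial : ℝ) / ((k+1).factorial * (k+1).factorial * (i+1).factorial)
      = 2 * ((i + 2*k + 2).factorial / (k.factorial * (k+1).factorial * (i+1).factorial))
        + (i + 2*k + 2).factorial / ((k+1).factorial * (k+1).factorial * i.factorial) := by
  have h1 : (i + 2*k + 3).factorial = (i + 2*k + 3) * (i + 2*k + 2).factorial := by
    rw [show i + 2*k + 3 = (i + 2*k + 2) + 1 by ring, Nat.factorial_succ]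
  have h2 : (k+1).factorial = (k+1) * k.factorial := Nat.factorial_succ k
  have h3 : (i+1).factorial = (i+1) * i.factorial := Nat.factorial_succ i
  rw [h1, h2, h3]
  push_cast
  field_simp
  ring

/-- `g_{2d+2,d+1}(t) = 2 g_{2d+1,d}(t) + t g_{2d,d}(t)` for `d ≥ 1`. -/
theorem gPoly_recurrence_diag₄ (d : ℕ) (hd : 1 ≤ d) :
    gPoly (2 * d + 2) (d + 1) = 2 * gPoly (2 * d + 1) d + X * gPoly (2 * d) d := by
  obtain ⟨e, rfl⟩ : ∃ e, d = e + 1 := ⟨d - 1, by omega⟩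
  unfold gPoly
  rw [show min (e + 1 + 1) (2 * (e + 1) + 2 - (e + 1 + 1)) = e + 2 by omega,
      show min (e + 1) (2 * (e + 1) + 1 - (e + 1)) = e + 1 by omega,
      show min (e + 1) (2 * (e + 1) - (e + 1)) = e + 1 by omega,
      Finset.mul_sum, Finset.mul_sum,
      sum_icc_one _ (e + 2), sum_icc_one _ (e + 1), sum_icc_one _ (e + 1)]
  conv_lhs => rw [Finset.sum_range_succ, Finset.sum_range_succ']
  conv_rhs => rw [Finset.sum_range_succ', Finset.sum_range_succ]
  have hmid : ∀ i ∈ Finset.range e,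
      (fun i => C ((2 * (e + 1) + 2 - (i + 1) - 1).factorial /
            ((e + 1 + 1 - (i + 1)).factorial * (2 * (e + 1) + 2 - (e + 1 + 1) - (i + 1)).factorial *
              (i + 1 - 1).factorial) : ℝ) * X ^ (i + 1)) (i + 1)
        = (fun i => 2 * (C ((2 * (e + 1) + 1 - (i + 1) - 1).factorial /
            ((e + 1 - (i + 1)).factorial * (2 * (e + 1) + 1 - (e + 1) - (i + 1)).factorial *
              (i + 1 - 1).factorial) : ℝ) * X ^ (i + 1))) (i + 1)
          + X * (C ((2 * (e + 1) - (i + 1) - 1).factorial /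
            ((e + 1 - (i + 1)).factorial * (2 * (e + 1) - (e + 1) - (i + 1)).factorial *
              (i + 1 - 1).factorial) : ℝ) * X ^ (i + 1)) := by
    intro i hi
    simp only [Finset.mem_range] at hi
    obtain ⟨k, rfl⟩ : ∃ k, e = i + k + 1 := ⟨e - i - 1, by omega⟩
    simp only
    rw [show 2*(i+k+1+1)+2 - (i+1+1) - 1 = i+2*k+3 from by omega,
        show i+k+1+1+1 - (i+1+1) = k+1 from by omega,
        show 2*(i+k+1+1)+2 - (i+k+1+1+1) - (i+1+1) = k+1 from by omega,
        show i+1+1-1 = i+1 from by omega,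
        show 2*(i+k+1+1)+1 - (i+1+1) - 1 = i+2*k+2 from by omega,
        show i+k+1+1 - (i+1+1) = k from by omega,
        show 2*(i+k+1+1)+1 - (i+k+1+1) - (i+1+1) = k+1 from by omega,
        show 2*(i+k+1+1) - (i+1) - 1 = i+2*k+2 from by omega,
        show i+k+1+1 - (i+1) = k+1 from by omega,
        show 2*(i+k+1+1) - (i+k+1+1) - (i+1) = k+1 from by omega,
        show i+1-1 = i from by omega,
        key_s9 i k, C_add, C_mul]
    simp only [map_ofNat]
    ring
  rw [Finset.sum_congr rfl hmid, Finset.sum_add_distrib]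
  rw [show 2*(e+1)+2 - (0+1) - 1 = 2*e+2 from by omega,
      show e+1+1 - (0+1) = e+1 from by omega,
      show 2*(e+1)+2 - (e+1+1) - (0+1) = e+1 from by omega,
      show (0+1-1 : ℕ) = 0 from by omega,
      show e+1+1 - (e+1+1) = 0 from by omega,
      show 2*(e+1)+2 - (e+1+1) - (e+1+1) = 0 from by omega,
      show 2*(e+1)+1 - (0+1) - 1 = 2*e+1 from by omega,
      show e+1 - (0+1) = e from by omega,
      show 2*(e+1)+1 - (e+1) - (0+1) = e+1 from by omega,
      show 2*(e+1) - (e+1) - 1 = e from by omega,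
      show e+1 - (e+1) = 0 from by omega,
      show 2*(e+1) - (e+1) - (e+1) = 0 from by omega]
  have hA0 : ((2*e+2).factorial : ℝ)/((e+1).factorial*(e+1).factorial*(Nat.factorial 0))
      = 2*(((2*e+1).factorial : ℝ)/(e.factorial*(e+1).factorial*(Nat.factorial 0))) := by
    rw [show 2*e+2 = (2*e+1)+1 from by omega, Nat.factorial_succ (2*e+1), Nat.factorial_succ e]
    have h1 := factR_ne e
    have h2 := factR_ne (2*e+1)
    push_cast
    field_simp
    ring
  have hT1 : ((e+1).factorial : ℝ)/((Nat.factorial 0)*(Nat.factorial 0)*(e+1).factorial) = 1 := by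
    rw [Nat.factorial_zero]; push_cast; rw [one_mul, one_mul, div_self (factR_ne _)]
  have hT2 : (e.factorial : ℝ)/((Nat.factorial 0)*(Nat.factorial 0)*e.factorial) = 1 := by
    rw [Nat.factorial_zero]; push_cast; rw [one_mul, one_mul, div_self (factR_ne _)]
  rw [hA0, hT1, hT2]
  simp only [map_mul, map_ofNat, map_one]
  ring
end

section
/- For every integer d ≥ 1, the real polynomials g_{n,d}(t) satisfy the differential recurrence ((d+1)·t + 1)·g_{2d+1,d}(t) = d·t·g_{2d,d}(t) + t(t+1)·g'_{2d+1,d}(t), where g' denotes the derivative with respect to t. -/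
open Polynomial

open Finset

noncomputable def aa (d i : ℕ) : ℝ :=
  (Nat.factorial (2*d - i) : ℝ) /
    ((Nat.factorial (d - i) : ℝ) * (Nat.factorial (d + 1 - i) : ℝ) * (Nat.factorial (i - 1) : ℝ))

noncomputable def bb (d i : ℕ) : ℝ :=
  (Nat.factorial (2*d - i - 1) : ℝ) /
    ((Nat.factorial (d - i) : ℝ) * (Nat.factorial (d - i) : ℝ) * (Nat.factorial (i - 1) : ℝ))

lemma key1 (d i : ℕ) (h1 : 1 ≤ i) (h2 : i + 1 ≤ d) :
    ((d:ℝ)+1-i) * aa d i - d * bb d i = i * aa d (i+1) := by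
  obtain ⟨m, rfl⟩ : ∃ m, i = m + 1 := ⟨i-1, by omega⟩
  obtain ⟨l, rfl⟩ : ∃ l, d = m + l + 2 := ⟨d - m - 2, by omega⟩
  unfold aa bb
  simp only [show 2*(m+l+2) - (m+1) = (m+2*l+2)+1 from by omega,
    show (m+l+2) - (m+1) = l+1 from by omega,
    show (m+l+2) + 1 - (m+1) = (l+1)+1 from by omega,
    show (m+1) - 1 = m from by omega,
    show 2*(m+l+2) - (m+1) - 1 = m+2*l+2 from by omega,
    show 2*(m+l+2) - (m+1+1) = m+2*l+2 from by omega,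
    show (m+l+2) - (m+1+1) = l from by omega,
    show (m+l+2) + 1 - (m+1+1) = l+1 from by omega,
    show (m+1+1) - 1 = m + 1 from by omega]
  rw [Nat.factorial_succ (m+2*l+2), Nat.factorial_succ (l+1), Nat.factorial_succ l,
    Nat.factorial_succ m]
  have hA : (Nat.factorial (m+2*l+2) : ℝ) ≠ 0 := Nat.cast_ne_zero.2 (Nat.factorial_ne_zero _)
  have hl : (Nat.factorial l : ℝ) ≠ 0 := Nat.cast_ne_zero.2 (Nat.factorial_ne_zero _)
  have hm : (Nat.factorial m : ℝ) ≠ 0 := Nat.cast_ne_zero.2 (Nat.factorial_ne_zero _)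
  push_cast
  have hl1 : (l:ℝ) + 1 ≠ 0 := by positivity
  have hm1 : (m:ℝ) + 1 ≠ 0 := by positivity
  field_simp
  ring

lemma key2 (d : ℕ) (hd : 1 ≤ d) : aa d d = d * bb d d := by
  obtain ⟨m, rfl⟩ : ∃ m, d = m + 1 := ⟨d-1, by omega⟩
  unfold aa bb
  simp only [show 2*(m+1) - (m+1) = m+1 from by omega,
    show (m+1) - (m+1) = 0 from by omega,
    show (m+1) + 1 - (m+1) = 1 from by omega,
    show 2*(m+1) - (m+1) - 1 = m from by omega]
  rw [Nat.factorial_succ m]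
  have hm : (Nat.factorial m : ℝ) ≠ 0 := Nat.cast_ne_zero.2 (Nat.factorial_ne_zero _)
  simp [Nat.factorial]
  field_simp

lemma gPoly_odd (d : ℕ) : gPoly (2*d+1) d = ∑ i ∈ Icc 1 d, C (aa d i) * X ^ i := by
  unfold gPoly aa
  rw [show min d (2*d+1-d) = d from by omega]
  refine Finset.sum_congr rfl fun i hi => ?_
  rw [show 2*d+1-i-1 = 2*d-i from by omega, show 2*d+1-d-i = d+1-i from by omega]

lemma gPoly_even (d : ℕ) : gPoly (2*d) d = ∑ i ∈ Icc 1 d, C (bb d i) * X ^ i := by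
  unfold gPoly bb
  rw [show min d (2*d-d) = d from by omega]
  refine Finset.sum_congr rfl fun i hi => ?_
  rw [show 2*d-d-i = d-i from by omega]

/-- Differential recurrence
`((d+1) t + 1) g_{2d+1,d}(t) = d t g_{2d,d}(t) + t(t+1) g'_{2d+1,d}(t)` for `d ≥ 1`. -/
theorem gPoly_diff_recurrence_diag₂ (d : ℕ) (hd : 1 ≤ d) :
    (C ((d : ℝ) + 1) * X + 1) * gPoly (2 * d + 1) d =
      C (d : ℝ) * X * gPoly (2 * d) d +
        X * (X + 1) * derivative (gPoly (2 * d + 1) d) := by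
  rw [gPoly_odd, gPoly_even, derivative_sum]
  simp only [derivative_C_mul, derivative_X_pow]
  rw [Finset.mul_sum, Finset.mul_sum, Finset.mul_sum]
  have expand : ∀ i ∈ Icc 1 d,
      (C ((d : ℝ) + 1) * X + 1) * (C (aa d i) * X ^ i)
        - C (d : ℝ) * X * (C (bb d i) * X ^ i)
        - X * (X + 1) * (C (aa d i) * (C (i : ℝ) * X ^ (i - 1)))
      = C (((d:ℝ)+1-i) * aa d i - d * bb d i) * X ^ (i+1)
        - C (((i:ℝ)-1) * aa d i) * X ^ i := by
    intro i hi
    simp only [Finset.mem_Icc] at hi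
    obtain ⟨j, rfl⟩ : ∃ j, i = j + 1 := ⟨i-1, by omega⟩
    simp only [Nat.add_sub_cancel]
    push_cast
    simp only [map_sub, map_mul, map_add, map_natCast, map_one]
    ring
  rw [← sub_eq_zero, ← sub_sub, ← Finset.sum_sub_distrib, ← Finset.sum_sub_distrib,
    Finset.sum_congr rfl expand, Finset.sum_sub_distrib, sub_eq_zero]
  -- now: ∑ C(c i) X^(i+1) = ∑ C(e i) X^i
  obtain ⟨n, rfl⟩ : ∃ n, d = n + 1 := ⟨d-1, by omega⟩
  rw [Finset.sum_Icc_succ_top (by omega : 1 ≤ n + 1)]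
  rw [show (((n+1:ℕ):ℝ)+1-((n+1:ℕ):ℝ)) * aa (n+1) (n+1) - ((n+1:ℕ):ℝ) * bb (n+1) (n+1) = 0 by
    rw [key2 (n+1) (by omega)]; push_cast; ring]
  rw [map_zero, zero_mul, add_zero]
  -- RHS: drop i = 1 term (it is zero) and reindex
  have h1 : Icc 1 (n+1) = insert 1 (Icc 2 (n+1)) := by
    ext x; simp [Finset.mem_Icc, Finset.mem_insert]; omega
  rw [h1, Finset.sum_insert (by simp)]
  rw [show (((1:ℕ):ℝ)-1) * aa (n+1) 1 = 0 from by push_cast; ring, map_zero, zero_mul, zero_add]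
  have h2 : Icc 2 (n+1) = (Icc 1 n).map (addRightEmbedding 1) := by
    rw [Finset.map_add_right_Icc]
  rw [h2, Finset.sum_map]
  refine Finset.sum_congr rfl fun i hi => ?_
  simp only [Finset.mem_Icc] at hi
  simp only [addRightEmbedding_apply]
  rw [show ((i+1:ℕ):ℝ) - 1 = (i:ℝ) from by push_cast; ring,
    ← key1 (n+1) i hi.1 (by omega)]
end

section
/- For every integer d ≥ 1, the real polynomials g_{n,d}(t) satisfy the second-order differential recurrence d·((d+1)·t + d + 2)·g_{2d+1,d}(t) = d·(2d·t + 2d + 1)·g_{2d,d}(t) + t(t+1)²·g''_{2d+1,d}(t), where g'' denotes the second derivative with respect to t. -/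
open Polynomial

noncomputable def cfun (d i : ℕ) : ℝ :=
  (Nat.factorial (2*d - i) : ℝ) /
    ((Nat.factorial (d - i) : ℝ) * (Nat.factorial (d + 1 - i) : ℝ) * (Nat.factorial (i - 1) : ℝ))

noncomputable def bfun (d i : ℕ) : ℝ :=
  (Nat.factorial (2*d - 1 - i) : ℝ) /
    ((Nat.factorial (d - i) : ℝ) * (Nat.factorial (d - i) : ℝ) * (Nat.factorial (i - 1) : ℝ))

lemma fne_s13 (n : ℕ) : ((n.factorial : ℝ)) ≠ 0 := Nat.cast_ne_zero.mpr n.factorial_ne_zero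

lemma fexp (a b : ℕ) (h : a = b + 1) :
    ((a.factorial : ℝ)) = ((b:ℝ)+1) * b.factorial := by
  subst h; rw [Nat.factorial_succ]; push_cast; ring

lemma coeff_g1 (d k : ℕ) :
    (gPoly (2*d+1) d).coeff k = if 1 ≤ k ∧ k ≤ d then cfun d k else 0 := by
  unfold gPoly
  rw [show 2*d+1-d = d+1 by omega, min_eq_left (by omega), finset_sum_coeff]
  simp only [coeff_C_mul, coeff_X_pow, mul_ite, mul_one, mul_zero]
  rw [Finset.sum_ite_eq (Finset.Icc 1 d) k]
  simp only [Finset.mem_Icc, cfun,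
    show ∀ i : ℕ, 2*d+1-i-1 = 2*d-i from fun i => by omega,
    show ∀ i : ℕ, 2*d+1-d-i = d+1-i from fun i => by omega]

lemma coeff_g0 (d k : ℕ) :
    (gPoly (2*d) d).coeff k = if 1 ≤ k ∧ k ≤ d then bfun d k else 0 := by
  unfold gPoly
  rw [show 2*d-d = d by omega, min_self, finset_sum_coeff]
  simp only [coeff_C_mul, coeff_X_pow, mul_ite, mul_one, mul_zero]
  rw [Finset.sum_ite_eq (Finset.Icc 1 d) k]
  simp only [Finset.mem_Icc, bfun,
    show ∀ i : ℕ, 2*d-i-1 = 2*d-1-i from fun i => by omega,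
    show ∀ i : ℕ, 2*d-d-i = d-i from fun i => by omega]

set_option maxHeartbeats 2000000 in
/-- Second-order differential recurrence
`d((d+1) t + d + 2) g_{2d+1,d}(t) = d(2d t + 2d + 1) g_{2d,d}(t) + t(t+1)^2 g''_{2d+1,d}(t)`
for `d ≥ 1`. -/
theorem gPoly_diff2_recurrence_diag₂ (d : ℕ) (hd : 1 ≤ d) :
    C (d : ℝ) * (C ((d : ℝ) + 1) * X + C ((d : ℝ) + 2)) * gPoly (2 * d + 1) d =
      C (d : ℝ) * (C (2 * (d : ℝ)) * X + C (2 * (d : ℝ) + 1)) * gPoly (2 * d) d +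
        X * (X + 1) ^ 2 * derivative (derivative (gPoly (2 * d + 1) d)) := by
  have h2 : (C (2:ℝ)) = 2 := map_ofNat C 2
  have hL : C (d : ℝ) * (C ((d : ℝ) + 1) * X + C ((d : ℝ) + 2)) * gPoly (2*d+1) d
      = C ((d:ℝ)*((d:ℝ)+1)) * (gPoly (2*d+1) d * X^1)
        + C ((d:ℝ)*((d:ℝ)+2)) * gPoly (2*d+1) d := by
    simp only [C_mul, C_add, C_1, h2]; ring
  have hR : C (d : ℝ) * (C (2*(d : ℝ)) * X + C (2*(d : ℝ) + 1)) * gPoly (2*d) d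
      = C ((d:ℝ)*(2*(d:ℝ))) * (gPoly (2*d) d * X^1)
        + C ((d:ℝ)*(2*(d:ℝ)+1)) * gPoly (2*d) d := by
    simp only [C_mul, C_add, C_1, h2]; ring
  have hD : X * (X + 1) ^ 2 * derivative (derivative (gPoly (2*d+1) d))
      = derivative (derivative (gPoly (2*d+1) d)) * X ^ 3
        + C 2 * (derivative (derivative (gPoly (2*d+1) d)) * X ^ 2)
        + derivative (derivative (gPoly (2*d+1) d)) * X^1 := by
    rw [h2]; ring
  rw [hL, hR, hD]
  ext k
  simp only [coeff_add, coeff_C_mul, coeff_mul_X_pow']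
  clear hL hR hD h2
  match k with
  | 0 =>
    simp [coeff_g1, coeff_g0]
  | 1 =>
    simp only [coeff_derivative, coeff_g1, coeff_g0]
    norm_num
    match d, hd with
    | 1, _ => norm_num [cfun, bfun, Nat.factorial]
    | (e+2), _ =>
      rw [if_pos (by omega : 1 ≤ e+2), if_pos (by omega : 1 ≤ e+2),
          if_pos (by omega : 2 ≤ e+2)]
      simp only [cfun, bfun,
        show 2*(e+2)-1 = 2*e+3 by omega, show e+2-1 = e+1 by omega,
        show e+2+1-1 = e+2 by omega, show 2*(e+2)-2 = 2*e+2 by omega,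
        show e+2-2 = e by omega, show e+2+1-2 = e+1 by omega,
        show 2*(e+2)-1-1 = 2*e+2 by omega, show 2*e+3-1 = 2*e+2 by omega,
        show (1:ℕ)-1 = 0 by omega, show (2:ℕ)-1 = 1 by omega,
        Nat.factorial_zero, Nat.factorial_one]
      simp only [fexp (2*e+3) (2*e+2) (by omega), fexp (e+2) (e+1) (by omega),
          fexp (e+1) e (by omega)]
      have h1 := fne_s13 e; have h2 := fne_s13 (2*e+2)
      push_cast
      field_simp
      ring
  | 2 =>
    simp only [coeff_derivative, coeff_g1, coeff_g0]
    norm_num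
    match d, hd with
    | 1, _ =>
      norm_num [cfun, bfun, Nat.factorial]
    | 2, _ =>
      norm_num [cfun, bfun, Nat.factorial]
    | (e+3), _ =>
      rw [if_pos (by omega : 1 ≤ e+3), if_pos (by omega : 2 ≤ e+3),
          if_pos (by omega : 1 ≤ e+3), if_pos (by omega : 2 ≤ e+3),
          if_pos (by omega : 2 ≤ e+3), if_pos (by omega : 3 ≤ e+3)]
      simp only [cfun, bfun,
        show 2*(e+3)-1 = 2*e+5 by omega, show e+3-1 = e+2 by omega,
        show e+3+1-1 = e+3 by omega,
        show 2*(e+3)-2 = 2*e+4 by omega, show e+3-2 = e+1 by omega,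
        show e+3+1-2 = e+2 by omega,
        show 2*(e+3)-3 = 2*e+3 by omega, show e+3-3 = e by omega,
        show e+3+1-3 = e+1 by omega,
        show 2*(e+3)-1-1 = 2*e+4 by omega, show 2*(e+3)-1-2 = 2*e+3 by omega,
        show 2*e+5-1 = 2*e+4 by omega, show 2*e+5-2 = 2*e+3 by omega,
        show (1:ℕ)-1 = 0 by omega, show (2:ℕ)-1 = 1 by omega, show (3:ℕ)-1 = 2 by omega,
        Nat.factorial_zero, Nat.factorial_one, Nat.factorial_two]
      simp only [fexp (2*e+5) (2*e+4) (by omega), fexp (2*e+4) (2*e+3) (by omega),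
          fexp (e+3) (e+2) (by omega), fexp (e+2) (e+1) (by omega),
          fexp (e+1) e (by omega)]
      have h1 := fne_s13 e; have h2 := fne_s13 (2*e+3)
      push_cast
      field_simp
      ring
  | (m+3) =>
    simp only [coeff_derivative, coeff_g1, coeff_g0]
    norm_num
    simp only [Nat.lt_iff_add_one_le, show m+3-2 = m+1 by omega, show m+1+1 = m+2 by omega,
      show m+2+1 = m+3 by omega, show m+3+1 = m+4 by omega]
    rcases Nat.lt_or_ge d (m+2) with h | h
    · have g1 : ¬(m+2 ≤ d) := by omega
      have g2 : ¬(m+3 ≤ d) := by omega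
      have g3 : ¬(m+4 ≤ d) := by omega
      simp [g1, g2, g3]
    rcases Nat.lt_or_ge d (m+4) with h' | h'
    · obtain rfl | rfl : d = m+2 ∨ d = m+3 := by omega
      · -- d = m+2
        have g2 : ¬(m+3 ≤ m+2) := by omega
        have g3 : ¬(m+4 ≤ m+2) := by omega
        simp only [if_pos (le_refl (m+2)), if_neg g2, if_neg g3]
        simp only [cfun, bfun,
          show 2*(m+2)-(m+2) = m+2 by omega, show m+2-(m+2) = 0 by omega,
          show m+2+1-(m+2) = 1 by omega, show m+2-1 = m+1 by omega,
          show 2*(m+2)-1-(m+2) = m+1 by omega,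
          Nat.factorial_zero, Nat.factorial_one]
        simp only [fexp (m+2) (m+1) (by omega)]
        have h1 := fne_s13 (m+1)
        push_cast
        field_simp
        ring
      · -- d = m+3
        have g3 : ¬(m+4 ≤ m+3) := by omega
        simp only [if_pos (by omega : m+2 ≤ m+3), if_pos (le_refl (m+3)), if_neg g3]
        simp only [cfun, bfun,
          show 2*(m+3)-(m+2) = m+4 by omega, show m+3-(m+2) = 1 by omega,
          show m+3+1-(m+2) = 2 by omega, show m+2-1 = m+1 by omega,
          show 2*(m+3)-(m+3) = m+3 by omega, show m+3-(m+3) = 0 by omega,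
          show m+3+1-(m+3) = 1 by omega, show m+3-1 = m+2 by omega,
          show 2*(m+3)-1-(m+2) = m+3 by omega, show 2*(m+3)-1-(m+3) = m+2 by omega,
          Nat.factorial_zero, Nat.factorial_one, Nat.factorial_two]
        simp only [fexp (m+4) (m+3) (by omega), fexp (m+3) (m+2) (by omega),
            fexp (m+2) (m+1) (by omega)]
        have h1 := fne_s13 (m+1)
        push_cast
        field_simp
        ring
    · obtain ⟨r, rfl⟩ : ∃ r, d = m+4+r := ⟨d-(m+4), by omega⟩
      simp only [if_pos (by omega : m+2 ≤ m+4+r), if_pos (by omega : m+3 ≤ m+4+r),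
        if_pos (by omega : m+4 ≤ m+4+r)]
      simp only [cfun, bfun,
        show 2*(m+4+r)-(m+2) = m+2*r+6 by omega, show m+4+r-(m+2) = r+2 by omega,
        show m+4+r+1-(m+2) = r+3 by omega, show m+2-1 = m+1 by omega,
        show 2*(m+4+r)-(m+3) = m+2*r+5 by omega, show m+4+r-(m+3) = r+1 by omega,
        show m+4+r+1-(m+3) = r+2 by omega, show m+3-1 = m+2 by omega,
        show 2*(m+4+r)-(m+4) = m+2*r+4 by omega, show m+4+r-(m+4) = r by omega,
        show m+4+r+1-(m+4) = r+1 by omega, show m+4-1 = m+3 by omega,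
        show 2*(m+4+r)-1-(m+2) = m+2*r+5 by omega,
        show 2*(m+4+r)-1-(m+3) = m+2*r+4 by omega]
      simp only [fexp (m+2*r+6) (m+2*r+5) (by omega), fexp (m+2*r+5) (m+2*r+4) (by omega),
          fexp (r+3) (r+2) (by omega), fexp (r+2) (r+1) (by omega),
          fexp (r+1) r (by omega),
          fexp (m+3) (m+2) (by omega), fexp (m+2) (m+1) (by omega)]
      have h1 := fne_s13 r; have h2 := fne_s13 (m+1); have h3 := fne_s13 (m+2*r+4)
      push_cast
      field_simp
      ring
end

section
/- For all integers n ≥ 2 and 1 ≤ d ≤ n−1, Speyer's g-polynomial g_{n,d}(t) has only real zeros; that is, every complex root of g_{n,d}, viewed as a polynomial over ℂ, is a real number (equivalently, g_{n,d} splits over ℝ). -/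
open Polynomial

/-- The derivative of a real polynomial that splits also splits (Rolle). -/
lemma splits_derivative_aux (p : ℝ[X]) (hp : p.Splits) :
    (derivative p).Splits := by
  by_cases h0 : (derivative p).natDegree ≤ 1
  · exact Splits.of_natDegree_le_one h0
  rw [splits_iff_card_roots]
  have h1 := splits_iff_card_roots.mp hp
  have h2 := Polynomial.card_roots_le_derivative p
  have h3 := Polynomial.card_roots' (derivative p)
  have h4 : (derivative p).natDegree ≤ p.natDegree - 1 := natDegree_derivative_le p
  omega

lemma splits_iterate_derivative_aux (p : ℝ[X]) (hp : p.Splits) (k : ℕ) :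
    (derivative^[k] p).Splits := by
  induction k with
  | zero => simpa using hp
  | succ k ih =>
      rw [Function.iterate_succ_apply']
      exact splits_derivative_aux _ ih

/-- The reverse of a real polynomial that splits also splits. -/
lemma splits_reverse_aux (p : ℝ[X]) (hp : p.Splits) :
    p.reverse.Splits := by
  have key : ∀ s : Multiset ℝ,
      (reverse ((s.map fun a => X - C a).prod)).Splits := by
    intro s
    induction s using Multiset.induction with
    | empty => exact Splits.of_natDegree_le_one ((reverse_natDegree_le _).trans (by simp))
    | cons a s ih =>
        rw [Multiset.map_cons, Multiset.prod_cons, reverse_mul_of_domain]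
        refine Splits.mul (Splits.of_natDegree_le_one ?_) ih
        exact (reverse_natDegree_le _).trans (by simp)
  have hpe := hp.eq_prod_roots
  rw [hpe, reverse_mul_of_domain, reverse_C]
  exact Splits.mul (Splits.C _) (key _)


lemma nat_key_aux (a b j : ℕ) (hja : j ≤ a) (hab : a ≤ b) :
    (a + b - j).choose b * b.choose (b - j) *
      ((a - j).factorial * ((b - j).factorial * j.factorial)) = (a + b - j).factorial := by
  have hjb : j ≤ b := hja.trans hab
  have e0 : b.choose (b - j) = b.choose j := Nat.choose_symm hjb
  have e1 : b.choose j * j.factorial * (b - j).factorial = b.factorial :=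
    Nat.choose_mul_factorial_mul_factorial hjb
  have e2 : (a + b - j).choose b * b.factorial * (a + b - j - b).factorial
      = (a + b - j).factorial := Nat.choose_mul_factorial_mul_factorial (by omega)
  have e3 : a + b - j - b = a - j := by omega
  rw [e3] at e2
  calc (a + b - j).choose b * b.choose (b - j) *
        ((a - j).factorial * ((b - j).factorial * j.factorial))
      = (a + b - j).choose b * (b.choose j * j.factorial * (b - j).factorial)
          * (a - j).factorial := by rw [e0]; ring
    _ = (a + b - j).choose b * b.factorial * (a - j).factorial := by rw [e1]
    _ = (a + b - j).factorial := e2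

/-- For `n ≥ 2` and `1 ≤ d ≤ n-1`, Speyer's g-polynomial `g_{n,d}(t)` has only real
zeros, i.e. it splits over `ℝ` (equivalently, every complex root is real). -/
theorem gPoly_real_rooted (n d : ℕ) (hn : 2 ≤ n) (hd1 : 1 ≤ d) (hd2 : d ≤ n - 1) :
    ((gPoly n d).map (RingHom.id ℝ)).Splits := by
  set a : ℕ := min d (n - d) - 1 with ha
  set b : ℕ := max d (n - d) - 1 with hb
  set q : ℝ[X] := X ^ a * (X + 1) ^ b with hq
  set h : ℝ[X] := derivative^[b] q with hh
  have hab : a ≤ b := by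
    simp only [ha, hb]; exact Nat.sub_le_sub_right (min_le_max) 1
  have hnd1 : 1 ≤ n - d := by omega
  have hmin1 : 1 ≤ min d (n - d) := le_min hd1 hnd1
  have hminmax : min d (n - d) + max d (n - d) = d + (n - d) := min_add_max _ _
  have hdn : d + (n - d) = n := by omega
  have hm : min d (n - d) = a + 1 := by omega
  have habn : a + b = n - 2 := by omega
  -- degree of q
  have hxm : (X + 1 : ℝ[X]).Monic := by simpa using monic_X_add_C (1 : ℝ)
  have hx1 : (X + 1 : ℝ[X]).natDegree = 1 := by simpa using natDegree_X_add_C (1 : ℝ)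
  have hqdeg : q.natDegree = a + b := by
    rw [hq, Monic.natDegree_mul (monic_X_pow a) (hxm.pow b), natDegree_X_pow,
      natDegree_pow, hx1, mul_one]
  have hqcoeff : ∀ s : ℕ, q.coeff (s + a) = (b.choose s : ℝ) := by
    intro s
    rw [hq, coeff_X_pow_mul, coeff_X_add_one_pow]
  have hcoeff : ∀ j ≤ a, h.coeff (a - j)
      = ((a + b - j).descFactorial b : ℝ) * (b.choose (b - j) : ℝ) := by
    intro j hj
    have hjb : j ≤ b := hj.trans hab
    have h1 : a - j + b = (b - j) + a := by omega
    have h2 : a - j + b = a + b - j := by omega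
    rw [hh, Polynomial.coeff_iterate_derivative, h1, hqcoeff, ← h1, h2, nsmul_eq_mul]
  have hhdeg : h.natDegree = a := by
    refine le_antisymm ((natDegree_iterate_derivative q b).trans (by omega)) ?_
    refine le_natDegree_of_ne_zero ?_
    have := hcoeff 0 (Nat.zero_le a)
    simp only [Nat.sub_zero] at this
    rw [this]
    have hd1' : 0 < (a + b).descFactorial b :=
      Nat.pos_of_ne_zero (fun hc => by have := Nat.descFactorial_eq_zero_iff_lt.mp hc; omega)
    have hc1' : 0 < b.choose b := Nat.choose_pos le_rfl
    positivity
  have hgeq : gPoly n d = C ((b.factorial : ℝ))⁻¹ * (X * h.reverse) := by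
    ext k
    rw [gPoly, finset_sum_coeff]
    simp only [coeff_C_mul, coeff_X_pow, mul_ite, mul_one, mul_zero]
    rw [Finset.sum_ite_eq]
    match k with
    | 0 =>
        simp
    | (j + 1) =>
        rw [coeff_X_mul]
        by_cases hj : j ≤ a
        · have hmem : j + 1 ∈ Finset.Icc 1 (min d (n - d)) := by
            rw [Finset.mem_Icc]; omega
          rw [if_pos hmem, coeff_reverse, hhdeg, revAt_le hj, hcoeff j hj,
            Nat.descFactorial_eq_factorial_mul_choose]
          have hN : n - (j + 1) - 1 = a + b - j := by omega
          have hden : ((d - (j+1)).factorial : ℝ) * ((n - d - (j+1)).factorial : ℝ)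
              * (((j+1) - 1).factorial : ℝ) ≠ 0 := by positivity
          rw [hN, div_eq_iff hden]
          have hbf : (b.factorial : ℝ) ≠ 0 := by positivity
          have key := nat_key_aux a b j hj hab
          have hpair : (d - (j+1)).factorial * (n - d - (j+1)).factorial
              = (a - j).factorial * (b - j).factorial := by
            rcases le_total d (n - d) with H | H
            · have h1 : d - (j+1) = a - j := by
                have := min_eq_left H; omega
              have h2 : n - d - (j+1) = b - j := by
                have := max_eq_right H; omega
              rw [h1, h2]
            · have h1 : d - (j+1) = b - j := by
                have := max_eq_left H; omega
              have h2 : n - d - (j+1) = a - j := by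
                have := min_eq_right H; omega
              rw [h1, h2, mul_comm]
          have hj1 : (j + 1) - 1 = j := rfl
          rw [hj1]
          have hpc : ((d - (j+1)).factorial : ℝ) * ((n - d - (j+1)).factorial : ℝ)
              = ((a - j).factorial : ℝ) * ((b - j).factorial : ℝ) := by
            exact_mod_cast congrArg (Nat.cast (R := ℝ)) hpair
          rw [hpc]
          have keyR : (((a + b - j).choose b : ℝ)) * ((b.choose (b - j) : ℝ)) *
              (((a - j).factorial : ℝ) * (((b - j).factorial : ℝ) * (j.factorial : ℝ)))
              = ((a + b - j).factorial : ℝ) := by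
            exact_mod_cast congrArg (Nat.cast (R := ℝ)) key
          push_cast
          rw [← keyR]
          field_simp
        · have hmem : j + 1 ∉ Finset.Icc 1 (min d (n - d)) := by
            rw [Finset.mem_Icc]; omega
          rw [if_neg hmem, coeff_eq_zero_of_natDegree_lt
            (lt_of_le_of_lt (le_trans (reverse_natDegree_le h) hhdeg.le)
              (show a < j by omega)), mul_zero]
  rw [Polynomial.map_id, hgeq]
  refine Splits.mul (Splits.C _) (Splits.mul Splits.X ?_)
  refine splits_reverse_aux _ (splits_iterate_derivative_aux _ ?_ _)
  refine Splits.mul (Splits.pow Splits.X _) (Splits.pow ?_ _)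
  exact Splits.of_natDegree_le_one ((natDegree_add_le _ _).trans (by simp))
end
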